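/- There is a universal constant c > 0 such that for every integer r ≥ 1 one has K_+ − K_− ≤ c r n̄ N / ℓ + (1 + r/2)^{−1} K_+, where n̄ = max_j n_j and N = Σ_j n_j. -/

import Mathlib

open MeasureTheory Real
open scoped Classical

noncomputable section

/-- One-particle configuration space `ℝ³`. -/
abbrev Pt := EuclideanSpace ℝ (Fin 3)
/-- Spatial configuration of `N` particles. -/
abbrev Cfg (N : ℕ) := Fin N → Pt
/-- Wave functions of `N` particles with `q` spin states. -/
abbrev WaveFn (N q : ℕ) := Cfg N → (Fin N → Fin q) → ℂ

/-- The weight `g(x⃗) = ∑_{i<j} 1/|x_i - x_j|`. -/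
def gInt (N : ℕ) (x : Cfg N) : ℝ :=
  ∑ i : Fin N, ∑ j ∈ Finset.Ioi i, 1 / ‖x i - x j‖

/-- `|∇_{x_i} f|` at `x`. -/
def gradI {N : ℕ} (f : Cfg N → ℂ) (i : Fin N) (x : Cfg N) : ℝ :=
  ‖fderiv ℝ (fun v : Pt => f (Function.update x i v)) (x i)‖

/-- The `m³` disjoint subcubes of side length `ℓ` of the cube `[0, mℓ]³`, indexed by
`j : Fin 3 → Fin m`. -/
def box {m : ℕ} (ℓ : ℝ) (j : Fin 3 → Fin m) : Set Pt :=
  {v : Pt | ∀ k : Fin 3, ((j k : ℕ) : ℝ) * ℓ ≤ v k ∧ v k < (((j k : ℕ) : ℝ) + 1) * ℓ}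

/-- The distance `d_{jk}` between boxes `B_j` and `B_k`. -/
def boxDist {m : ℕ} (ℓ : ℝ) (j k : Fin 3 → Fin m) : ℝ :=
  sInf (Set.image2 dist (box ℓ j) (box ℓ k))

/-- Number `n_j` of particles assigned to box `B_j` by the assignment `b`. -/
def nOcc {N m : ℕ} (b : Fin N → Fin 3 → Fin m) (j : Fin 3 → Fin m) : ℕ :=
  (Finset.univ.filter fun i => b i = j).card

/-- Number `m_j` of particles in the (at most 26) boxes touching `B_j`. -/
def mOcc {N m : ℕ} (ℓ : ℝ) (b : Fin N → Fin 3 → Fin m) (j : Fin 3 → Fin m) : ℕ :=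
  ∑ k ∈ Finset.univ.filter (fun k => k ≠ j ∧ boxDist ℓ j k = 0), nOcc b k

/-- `K_- = ∑_{j<k, d_{jk}>0} n_j n_k / (d_{jk} + 2√3 ℓ)`, written as a sum over ordered
pairs divided by two. -/
def Kminus {N m : ℕ} (ℓ : ℝ) (b : Fin N → Fin 3 → Fin m) : ℝ :=
  (1/2) * ∑ j : Fin 3 → Fin m, ∑ k : Fin 3 → Fin m,
    if 0 < boxDist ℓ j k then
      (nOcc b j : ℝ) * (nOcc b k : ℝ) / (boxDist ℓ j k + 2 * Real.sqrt 3 * ℓ)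
    else 0

/-- `K_+ = ∑_{j<k, d_{jk}>0} n_j n_k / d_{jk}`, written as a sum over ordered pairs
divided by two. -/
def Kplus {N m : ℕ} (ℓ : ℝ) (b : Fin N → Fin 3 → Fin m) : ℝ :=
  (1/2) * ∑ j : Fin 3 → Fin m, ∑ k : Fin 3 → Fin m,
    if 0 < boxDist ℓ j k then
      (nOcc b j : ℝ) * (nOcc b k : ℝ) / boxDist ℓ j k
    else 0

/-- `V = ∑_j n_j (n_j + m_j - 1)`. -/
def Vbox {N m : ℕ} (ℓ : ℝ) (b : Fin N → Fin 3 → Fin m) : ℝ :=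
  ∑ j : Fin 3 → Fin m, (nOcc b j : ℝ) * ((nOcc b j : ℝ) + (mOcc ℓ b j : ℝ) - 1)

/-- The region `B(n⃗) ⊂ ℝ^{3N}` where particle `i` lies in box `B_{b i}`. -/
def BSet {N m : ℕ} (ℓ : ℝ) (b : Fin N → Fin 3 → Fin m) : Set (Cfg N) :=
  {x : Cfg N | ∀ i, x i ∈ box ℓ (b i)}

/-- Antisymmetry under permutations of variables belonging to the same box. -/
def AntisymBox {N q m : ℕ} (b : Fin N → Fin 3 → Fin m) (ψ : WaveFn N q) : Prop :=
  ∀ τ : Equiv.Perm (Fin N), (∀ i, b (τ i) = b i) →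
    ∀ (x : Cfg N) (σ : Fin N → Fin q),
      ψ (x ∘ τ) (σ ∘ τ) = ((Equiv.Perm.sign τ : ℤ) : ℂ) * ψ x σ

/-- The class `A_q^{N,ℓ}(n⃗)`: wave functions supported in `B(n⃗)`, antisymmetric in the
variables belonging to the same box, with finite norms and energy integrands. -/
def MemABox {N q m : ℕ} (ℓ : ℝ) (b : Fin N → Fin 3 → Fin m) (ψ : WaveFn N q) : Prop :=
  AntisymBox b ψ ∧
  (∀ x σ, x ∉ BSet ℓ b → ψ x σ = 0) ∧
  (∀ σ, IntegrableOn (fun x : Cfg N => ‖ψ x σ‖^2) (BSet ℓ b)) ∧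
  (∀ σ, IntegrableOn (fun x : Cfg N => (gInt N x)^2 * ‖ψ x σ‖^2) (BSet ℓ b)) ∧
  (∀ σ i, IntegrableOn
    (fun x : Cfg N => (gInt N x)^2 * (gradI (fun y => ψ y σ) i x)^2) (BSet ℓ b))

/-- Unweighted squared `L²` norm of `ψ` (on `B(n⃗)`). -/
def normSq {N q m : ℕ} (ℓ : ℝ) (b : Fin N → Fin 3 → Fin m) (ψ : WaveFn N q) : ℝ :=
  ∑ σ : Fin N → Fin q, ∫ x in BSet ℓ b, ‖ψ x σ‖^2

/-- Weighted squared norm `‖ψ‖_g²`. -/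
def normGSq {N q m : ℕ} (ℓ : ℝ) (b : Fin N → Fin 3 → Fin m) (ψ : WaveFn N q) : ℝ :=
  ∑ σ : Fin N → Fin q, ∫ x in BSet ℓ b, (gInt N x)^2 * ‖ψ x σ‖^2

/-- Weighted inner product `⟨ψ,φ⟩_g` on `B(n⃗)`. -/
def innerG {N q m : ℕ} (ℓ : ℝ) (b : Fin N → Fin 3 → Fin m) (ψ φ : WaveFn N q) : ℂ :=
  ∑ σ : Fin N → Fin q,
    ∫ x in BSet ℓ b, ((gInt N x : ℝ) : ℂ)^2 * (starRingEnd ℂ) (ψ x σ) * φ x σ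

/-- The localized energy `E_g^ℓ(ψ) = ∑_i ∑_σ ∫_{B(n⃗)} g² |∇_i ψ|²`. -/
def energyLoc {N q m : ℕ} (ℓ : ℝ) (b : Fin N → Fin 3 → Fin m) (ψ : WaveFn N q) : ℝ :=
  ∑ i : Fin N, ∑ σ : Fin N → Fin q,
    ∫ x in BSet ℓ b, (gInt N x)^2 * (gradI (fun y => ψ y σ) i x)^2

/-!
With `a = 2√3 ℓ` one has `1/d - 1/(d + a) = a / (d (d + a))`, and `d_{jk} ≥ (s - 1) ℓ` where `s` is
the `ℓ^∞` distance of the box indices. If `s > 2r + 1` then `a (r/2) ≤ d_{jk}`, so the pair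
contributes at most `(1 + r/2)⁻¹ n_j n_k / d_{jk}`, which sums to `(1 + r/2)⁻¹ K_+`. Otherwise
`d_{jk} > 0` forces `s ≥ 2` and the pair contributes at most `n_j n̄ a / ((s - 1) ℓ)²`. Since at
most `(2t + 1)³` boxes lie within index distance `t` of `B_j`, summation by parts bounds
`∑_k 1/(s_k - 1)²` over `2 ≤ s_k ≤ 2r + 1` by `O(r)`, and `∑_j n_j = N` gives `O(r n̄ N / ℓ)`.
-/

open Finset

lemma sum_comp_eq_card_mul_add_sum_card_filter_le {ι : Type*} (s : Finset ι) (f : ι → ℕ)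
    (w : ℕ → ℝ) {T : ℕ} (hf : ∀ k ∈ s, f k ≤ T) :
    ∑ k ∈ s, w (f k)
      = #s * w T + ∑ t ∈ range T, #{k ∈ s | f k ≤ t} * (w t - w (t + 1)) := by
  have telescope : ∀ k ∈ s,
      w (f k) = w T + ∑ t ∈ range T, if f k ≤ t then w t - w (t + 1) else 0 := by
    intro k hk
    have hIco : {t ∈ range T | f k ≤ t} = Ico (f k) T := by
      ext
      simp only [mem_filter, mem_range, mem_Ico]
      omega
    rw [← sum_filter, hIco]
    have := sum_Ico_sub (fun t => -w t) (hf k hk)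
    simp only [sub_neg_eq_add, neg_add_eq_sub] at this
    linarith
  rw [sum_congr rfl telescope, sum_add_distrib, sum_const, nsmul_eq_mul, sum_comm]
  congr 1
  refine sum_congr rfl fun t _ => ?_
  rw [← sum_filter, sum_const, nsmul_eq_mul]

section IndexDist

variable {d m : ℕ}

def indexDist (j k : Fin d → Fin m) : ℕ :=
  univ.sup fun a => Nat.dist (j a) (k a)

lemma natDist_le_indexDist (j k : Fin d → Fin m) (a : Fin d) :
    Nat.dist (j a) (k a) ≤ indexDist j k :=
  le_sup (f := fun a => Nat.dist (j a) (k a)) (mem_univ a)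

lemma card_filter_natDist_le (x t : ℕ) : #{i : Fin m | Nat.dist x i ≤ t} ≤ 2 * t + 1 := by
  calc #{i : Fin m | Nat.dist x i ≤ t}
      ≤ #(Icc (x - t) (x + t)) := by
        refine card_le_card_of_injOn Fin.val (fun i hi => ?_) Fin.val_injective.injOn
        have hi := (mem_filter.mp (mem_coe.mp hi)).2
        rw [mem_coe, mem_Icc]
        unfold Nat.dist at hi
        omega
    _ ≤ 2 * t + 1 := by simp only [Nat.card_Icc]; omega

lemma card_indexDist_le (j : Fin d → Fin m) (t : ℕ) :
    #{k | indexDist j k ≤ t} ≤ (2 * t + 1) ^ d :=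
  calc #{k | indexDist j k ≤ t}
      ≤ #(Fintype.piFinset fun a => {i : Fin m | Nat.dist (j a) i ≤ t}) := by
        refine card_le_card fun k hk => ?_
        simp only [mem_filter, mem_univ, true_and, Fintype.mem_piFinset] at hk ⊢
        exact fun a => (natDist_le_indexDist j k a).trans hk
    _ = ∏ a, #{i : Fin m | Nat.dist (j a) i ≤ t} := Fintype.card_piFinset _
    _ ≤ ∏ _a : Fin d, (2 * t + 1) := prod_le_prod' fun a _ => card_filter_natDist_le _ _
    _ = (2 * t + 1) ^ d := by simp

end IndexDist

lemma inv_sq_sub_inv_sq_mul_le {x : ℝ} (hx : 2 ≤ x) :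
    (1 / (x - 1) ^ 2 - 1 / x ^ 2) * (2 * x + 1) ^ 3 ≤ 100 := by
  have h1 : 0 < (x - 1) ^ 2 := by nlinarith
  rw [div_sub_div _ _ h1.ne' (by positivity), div_mul_eq_mul_div, div_le_iff₀ (by positivity)]
  nlinarith [sq_nonneg (x - 2), sq_nonneg (x * (x - 2)), sq_nonneg ((x - 2) * (x - 1))]

lemma inv_sq_sub_inv_sq_nonneg {x : ℝ} (hx : 2 ≤ x) : 0 ≤ 1 / (x - 1) ^ 2 - 1 / x ^ 2 := by
  have h1 : 0 < (x - 1) ^ 2 := by nlinarith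
  exact sub_nonneg.mpr (one_div_le_one_div_of_le h1 (by nlinarith))

lemma sum_inv_sq_indexDist_sub_one_le {m : ℕ} (j : Fin 3 → Fin m) {T : ℕ} (hT : 1 ≤ T) :
    ∑ k with 2 ≤ indexDist j k ∧ indexDist j k ≤ T, 1 / ((indexDist j k : ℝ) - 1) ^ 2
      ≤ 250 * (T : ℝ) := by
  set s := ({k | 2 ≤ indexDist j k ∧ indexDist j k ≤ T} : Finset (Fin 3 → Fin m))
  have hcount : ∀ t, (#{k ∈ s | indexDist j k ≤ t} : ℝ) ≤ (2 * t + 1) ^ 3 := fun t => by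
    have : #{k ∈ s | indexDist j k ≤ t} ≤ (2 * t + 1) ^ 3 :=
      (card_le_card (filter_subset_filter _ (subset_univ s))).trans (card_indexDist_le j t)
    exact_mod_cast this
  have hboundary : #s * (1 / (((T + 1 : ℕ) : ℝ) - 1) ^ 2) ≤ 27 * T := by
    have hT' : (1 : ℝ) ≤ T := by exact_mod_cast hT
    have hs : (#s : ℝ) ≤ (2 * T + 1) ^ 3 := by
      have := hcount T
      rwa [filter_true_of_mem fun k hk => (mem_filter.mp hk).2.2] at this
    push_cast
    rw [add_sub_cancel_right, mul_one_div, div_le_iff₀ (by positivity)]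
    nlinarith
  have hterm : ∀ t ∈ range (T + 1), #{k ∈ s | indexDist j k ≤ t} *
      (1 / ((t : ℝ) - 1) ^ 2 - 1 / (((t + 1 : ℕ) : ℝ) - 1) ^ 2) ≤ 100 := by
    intro t _
    push_cast
    rw [add_sub_cancel_right]
    rcases lt_or_ge t 2 with ht | ht
    · have : {k ∈ s | indexDist j k ≤ t} = ∅ :=
        filter_eq_empty_iff.mpr fun k hk => by simp only [s, mem_filter] at hk; omega
      simp [this]
    · have ht' : (2 : ℝ) ≤ t := by exact_mod_cast ht
      calc _ ≤ (2 * (t : ℝ) + 1) ^ 3 * (1 / ((t : ℝ) - 1) ^ 2 - 1 / (t : ℝ) ^ 2) :=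
            mul_le_mul_of_nonneg_right (hcount t) (inv_sq_sub_inv_sq_nonneg ht')
        _ ≤ 100 := by rw [mul_comm]; exact inv_sq_sub_inv_sq_mul_le ht'
  rw [sum_comp_eq_card_mul_add_sum_card_filter_le s (indexDist j)
    (fun t => 1 / ((t : ℝ) - 1) ^ 2) (T := T + 1) fun k hk => by
      simp only [s, mem_filter] at hk; omega]
  have hsum := sum_le_sum hterm
  rw [sum_const, card_range, nsmul_eq_mul, Nat.cast_add_one] at hsum
  have hT' : (1 : ℝ) ≤ T := by exact_mod_cast hT
  linarith

section Boxes

variable {m : ℕ} {ℓ : ℝ}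

lemma box_nonempty (hℓ : 0 < ℓ) (j : Fin 3 → Fin m) : (box ℓ j).Nonempty :=
  ⟨WithLp.toLp 2 fun a => ((j a : ℕ) : ℝ) * ℓ, fun a => ⟨le_rfl, by simp; linarith⟩⟩

lemma boxDist_le_dist {j k : Fin 3 → Fin m} {u v : Pt} (hu : u ∈ box ℓ j)
    (hv : v ∈ box ℓ k) : boxDist ℓ j k ≤ dist u v :=
  csInf_le ⟨0, by rintro _ ⟨u, -, v, -, rfl⟩; exact dist_nonneg⟩
    (Set.mem_image2_of_mem hu hv)

lemma natDist_sub_one_mul_le_abs_sub {i i' : ℕ} {x y : ℝ}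
    (hx : (i : ℝ) * ℓ ≤ x ∧ x < ((i : ℝ) + 1) * ℓ)
    (hy : (i' : ℝ) * ℓ ≤ y ∧ y < ((i' : ℝ) + 1) * ℓ) :
    ((Nat.dist i i' : ℝ) - 1) * ℓ ≤ |x - y| := by
  rcases le_total i i' with h | h
  · rw [Nat.dist_eq_sub_of_le h, Nat.cast_sub h, abs_sub_comm]
    exact (by linarith : _ ≤ y - x).trans (le_abs_self _)
  · rw [Nat.dist_comm, Nat.dist_eq_sub_of_le h, Nat.cast_sub h]
    exact (by linarith : _ ≤ x - y).trans (le_abs_self _)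

lemma indexDist_sub_one_mul_le_boxDist (hℓ : 0 < ℓ) (j k : Fin 3 → Fin m) :
    ((indexDist j k : ℝ) - 1) * ℓ ≤ boxDist ℓ j k := by
  obtain ⟨a, -, ha⟩ := Finset.exists_mem_eq_sup Finset.univ Finset.univ_nonempty
    fun a => Nat.dist (j a) (k a)
  refine le_csInf ((box_nonempty hℓ j).image2 (box_nonempty hℓ k)) ?_
  rintro _ ⟨u, hu, v, hv, rfl⟩
  calc ((indexDist j k : ℝ) - 1) * ℓ = ((Nat.dist (j a) (k a) : ℝ) - 1) * ℓ := by
        rw [indexDist, ha]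
    _ ≤ |u a - v a| := natDist_sub_one_mul_le_abs_sub (hu a) (hv a)
    _ ≤ dist u v := PiLp.dist_apply_le u v a

def boxCenter (ℓ : ℝ) (j : Fin 3 → Fin m) : Pt :=
  WithLp.toLp 2 fun a => (((j a : ℕ) : ℝ) + 1 / 2) * ℓ

lemma add_smul_sub_boxCenter_mem_box (hℓ : 0 < ℓ) {j : Fin 3 → Fin m} {p : Pt}
    (hp : ∀ a, ((j a : ℕ) : ℝ) * ℓ ≤ p a ∧ p a ≤ (((j a : ℕ) : ℝ) + 1) * ℓ)
    {t : ℝ} (ht₀ : 0 < t) (ht₁ : t ≤ 1) :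
    p + t • (boxCenter ℓ j - p) ∈ box ℓ j := by
  intro a
  obtain ⟨hlo, hhi⟩ := hp a
  simp only [boxCenter, PiLp.add_apply, PiLp.smul_apply, PiLp.sub_apply, smul_eq_mul]
  constructor <;> nlinarith

lemma boxDist_nonneg (j k : Fin 3 → Fin m) : 0 ≤ boxDist ℓ j k :=
  Real.sInf_nonneg (by rintro _ ⟨u, -, v, -, rfl⟩; exact dist_nonneg)

/-- For touching boxes, the corner `p` with coordinates `max (j a) (k a) * ℓ` lies in both closed
boxes, and points on the segments from `p` to the two centers approach each other. -/
lemma boxDist_eq_zero_of_indexDist_le_one (hℓ : 0 < ℓ) {j k : Fin 3 → Fin m}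
    (h : indexDist j k ≤ 1) : boxDist ℓ j k = 0 := by
  have hjk : ∀ a, (j a : ℕ) ≤ k a + 1 ∧ (k a : ℕ) ≤ j a + 1 := fun a => by
    have := (natDist_le_indexDist j k a).trans h
    unfold Nat.dist at this
    omega
  set p : Pt := WithLp.toLp 2 fun a => max ((j a : ℕ) : ℝ) ((k a : ℕ) : ℝ) * ℓ
  have hp : ∀ {i i' : Fin 3 → Fin m}, (∀ a, (i' a : ℕ) ≤ i a + 1) →
      (∀ a, p a = max ((i a : ℕ) : ℝ) ((i' a : ℕ) : ℝ) * ℓ) →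
      ∀ a, ((i a : ℕ) : ℝ) * ℓ ≤ p a ∧ p a ≤ (((i a : ℕ) : ℝ) + 1) * ℓ := by
    intro i i' hii' hpa a
    have : ((i' a : ℕ) : ℝ) ≤ (i a : ℕ) + 1 := by exact_mod_cast hii' a
    rw [hpa a]
    exact ⟨by gcongr; exact le_max_left _ _, by gcongr; exact max_le (by linarith) this⟩
  have hpj := hp (fun a => (hjk a).2) fun a => rfl
  have hpk := hp (fun a => (hjk a).1) fun a => congrArg (· * ℓ) (max_comm _ _)
  set D := dist (boxCenter ℓ j) (boxCenter ℓ k)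
  have hle : ∀ t ∈ Set.Ioc (0 : ℝ) 1, boxDist ℓ j k ≤ t * D := by
    rintro t ⟨ht₀, ht₁⟩
    calc boxDist ℓ j k
        ≤ dist (p + t • (boxCenter ℓ j - p)) (p + t • (boxCenter ℓ k - p)) :=
          boxDist_le_dist (add_smul_sub_boxCenter_mem_box hℓ hpj ht₀ ht₁)
            (add_smul_sub_boxCenter_mem_box hℓ hpk ht₀ ht₁)
      _ = t * D := by
          rw [dist_eq_norm, show p + t • (boxCenter ℓ j - p) - (p + t • (boxCenter ℓ k - p))
            = t • (boxCenter ℓ j - boxCenter ℓ k) by module, norm_smul,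
            Real.norm_of_nonneg ht₀.le, ← dist_eq_norm]
  have hlim : Filter.Tendsto (fun t : ℝ => t * D) (nhdsWithin 0 (Set.Ioi 0)) (nhds 0) := by
    simpa using
      ((Filter.tendsto_id (x := nhds (0 : ℝ))).mono_left nhdsWithin_le_nhds).mul_const D
  exact le_antisymm
    (ge_of_tendsto hlim (Filter.eventually_of_mem (Ioc_mem_nhdsGT zero_lt_one) hle))
    (boxDist_nonneg j k)

end Boxes

lemma sqrt_three_le_two : √3 ≤ 2 := by
  rw [Real.sqrt_le_left (by norm_num)]
  norm_num

lemma one_div_sub_one_div_add_le_div_sq {d a w : ℝ} (hw : 0 < w) (hwd : w ≤ d) (ha : 0 ≤ a) :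
    1 / d - 1 / (d + a) ≤ a / w ^ 2 := by
  have hd : 0 < d := hw.trans_le hwd
  rw [div_sub_div _ _ hd.ne' (by positivity), one_mul, mul_one, add_sub_cancel_left]
  exact div_le_div_of_nonneg_left ha (by positivity) (by nlinarith)

lemma one_div_sub_one_div_add_le_inv_mul {d a ρ : ℝ} (hd : 0 < d) (ha : 0 ≤ a) (hρ : 0 < ρ)
    (h : a * (ρ - 1) ≤ d) : 1 / d - 1 / (d + a) ≤ ρ⁻¹ * (1 / d) := by
  rw [div_sub_div _ _ hd.ne' (by positivity), one_mul, mul_one, add_sub_cancel_left,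
    inv_mul_eq_div, div_div, div_le_div_iff₀ (by positivity) (by positivity)]
  nlinarith [mul_le_mul_of_nonneg_left h hd.le]

def nearWeight {m : ℕ} (ℓ : ℝ) (r : ℕ) (j k : Fin 3 → Fin m) : ℝ :=
  if 2 ≤ indexDist j k ∧ indexDist j k ≤ 2 * r + 1 then
    2 * √3 / ℓ * (1 / ((indexDist j k : ℝ) - 1) ^ 2) else 0

section NearWeight

variable {m : ℕ} {ℓ : ℝ}

lemma nearWeight_nonneg (hℓ : 0 < ℓ) (r : ℕ) (j k : Fin 3 → Fin m) :
    0 ≤ nearWeight ℓ r j k := by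
  unfold nearWeight
  split_ifs <;> positivity

lemma sum_nearWeight_le (hℓ : 0 < ℓ) (r : ℕ) (j : Fin 3 → Fin m) :
    ∑ k, nearWeight ℓ r j k ≤ 2 * √3 / ℓ * (250 * (2 * r + 1)) := by
  have := sum_inv_sq_indexDist_sub_one_le j (T := 2 * r + 1) (by omega)
  push_cast at this
  unfold nearWeight
  rw [← sum_filter, ← mul_sum]
  gcongr

lemma one_div_boxDist_sub_one_div_boxDist_add_le (hℓ : 0 < ℓ) {j k : Fin 3 → Fin m}
    (hd : 0 < boxDist ℓ j k) (r : ℕ) :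
    1 / boxDist ℓ j k - 1 / (boxDist ℓ j k + 2 * √3 * ℓ)
      ≤ nearWeight ℓ r j k + (1 + (r : ℝ) / 2)⁻¹ * (1 / boxDist ℓ j k) := by
  have hS : 2 ≤ indexDist j k := by
    by_contra hS
    exact hd.ne' (boxDist_eq_zero_of_indexDist_le_one hℓ (by omega))
  have hlow := indexDist_sub_one_mul_le_boxDist hℓ j k
  have hS' : (2 : ℝ) ≤ indexDist j k := by exact_mod_cast hS
  have ha : 0 ≤ 2 * √3 * ℓ := by positivity
  have hfar : 0 ≤ (1 + (r : ℝ) / 2)⁻¹ * (1 / boxDist ℓ j k) := by positivity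
  unfold nearWeight
  split_ifs with hnear
  · have hw : 0 < ((indexDist j k : ℝ) - 1) * ℓ := by nlinarith
    calc _ ≤ 2 * √3 * ℓ / (((indexDist j k : ℝ) - 1) * ℓ) ^ 2 :=
          one_div_sub_one_div_add_le_div_sq hw hlow ha
      _ = 2 * √3 / ℓ * (1 / ((indexDist j k : ℝ) - 1) ^ 2) := by
          field_simp
      _ ≤ _ := le_add_of_nonneg_right hfar
  · have hr : (2 * r + 2 : ℝ) ≤ indexDist j k := by exact_mod_cast (by omega : 2 * r + 2 ≤ _)
    rw [zero_add]
    refine one_div_sub_one_div_add_le_inv_mul hd ha (by positivity) ?_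
    nlinarith [mul_le_mul_of_nonneg_right sqrt_three_le_two (by positivity : (0 : ℝ) ≤ r * ℓ)]

lemma Kplus_term_sub_Kminus_term_le (hℓ : 0 < ℓ) (r : ℕ) (j k : Fin 3 → Fin m)
    {nj nk nbar : ℝ} (hnj : 0 ≤ nj) (hnk : 0 ≤ nk) (hnbar : nk ≤ nbar) :
    (if 0 < boxDist ℓ j k then nj * nk / boxDist ℓ j k else 0)
        - (if 0 < boxDist ℓ j k then nj * nk / (boxDist ℓ j k + 2 * √3 * ℓ) else 0)
      ≤ nj * nbar * nearWeight ℓ r j k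
        + (1 + (r : ℝ) / 2)⁻¹ * if 0 < boxDist ℓ j k then nj * nk / boxDist ℓ j k else 0 := by
  have hnear := nearWeight_nonneg hℓ r j k
  split_ifs with hd
  · calc _ = nj * nk * (1 / boxDist ℓ j k - 1 / (boxDist ℓ j k + 2 * √3 * ℓ)) := by ring
      _ ≤ nj * nk * (nearWeight ℓ r j k + (1 + (r : ℝ) / 2)⁻¹ * (1 / boxDist ℓ j k)) :=
        mul_le_mul_of_nonneg_left (one_div_boxDist_sub_one_div_boxDist_add_le hℓ hd r)
          (mul_nonneg hnj hnk)
      _ ≤ nj * nbar * nearWeight ℓ r j k + (1 + (r : ℝ) / 2)⁻¹ * (nj * nk / boxDist ℓ j k) := by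
        rw [mul_add, show nj * nk * ((1 + (r : ℝ) / 2)⁻¹ * (1 / boxDist ℓ j k))
          = (1 + (r : ℝ) / 2)⁻¹ * (nj * nk / boxDist ℓ j k) by ring]
        gcongr
  · rw [sub_self, mul_zero, add_zero]
    exact mul_nonneg (mul_nonneg hnj (hnk.trans hnbar)) hnear

lemma Kplus_row_sub_Kminus_row_le (hℓ : 0 < ℓ) (r : ℕ)
    {n : (Fin 3 → Fin m) → ℝ} (hn : ∀ k, 0 ≤ n k) {nbar : ℝ} (hnbar : ∀ k, n k ≤ nbar)
    (j : Fin 3 → Fin m) :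
    (∑ k, if 0 < boxDist ℓ j k then n j * n k / boxDist ℓ j k else 0)
        - (∑ k, if 0 < boxDist ℓ j k then n j * n k / (boxDist ℓ j k + 2 * √3 * ℓ) else 0)
      ≤ n j * (nbar * (2 * √3 / ℓ) * (250 * (2 * r + 1)))
        + (1 + (r : ℝ) / 2)⁻¹
          * ∑ k, if 0 < boxDist ℓ j k then n j * n k / boxDist ℓ j k else 0 := by
  rw [← sum_sub_distrib, mul_sum]
  calc _ ≤ ∑ k, (n j * nbar * nearWeight ℓ r j k
        + (1 + (r : ℝ) / 2)⁻¹ * if 0 < boxDist ℓ j k then n j * n k / boxDist ℓ j k else 0) :=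
        sum_le_sum fun k _ => Kplus_term_sub_Kminus_term_le hℓ r j k (hn j) (hn k) (hnbar k)
    _ = n j * nbar * ∑ k, nearWeight ℓ r j k + ∑ k, (1 + (r : ℝ) / 2)⁻¹ *
        if 0 < boxDist ℓ j k then n j * n k / boxDist ℓ j k else 0 := by
        rw [sum_add_distrib, mul_sum]
    _ ≤ _ := by
        have := mul_le_mul_of_nonneg_left (sum_nearWeight_le hℓ r j)
          (mul_nonneg (hn j) ((hn j).trans (hnbar j)))
        linarith

end NearWeight

lemma sum_nOcc {N m : ℕ} (b : Fin N → Fin 3 → Fin m) : ∑ j, nOcc b j = N := by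
  simpa [nOcc] using
    (card_eq_sum_card_fiberwise (s := univ) (t := univ) (f := b) fun _ _ => mem_univ _).symm

/-- **Bound on `K_+ - K_-`:** there is a universal `c > 0` such that for every integer
`r ≥ 1`, `K_+ - K_- ≤ c r n̄ N / ℓ + (1 + r/2)⁻¹ K_+`, with `n̄ = max_j n_j`. -/
theorem Kplus_sub_Kminus_bound :
    ∃ c : ℝ, 0 < c ∧
      ∀ (N m : ℕ), 2 ≤ m → ∀ ℓ : ℝ, 0 < ℓ → ∀ b : Fin N → Fin 3 → Fin m,
        ∀ r : ℕ, 1 ≤ r →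
          Kplus ℓ b - Kminus ℓ b
            ≤ c * r * ((Finset.univ.sup fun j => nOcc b j : ℕ) : ℝ) * N / ℓ
              + (1 + (r : ℝ) / 2)⁻¹ * Kplus ℓ b := by
  refine ⟨1500, by norm_num, fun N m _ ℓ hℓ b r hr => ?_⟩
  set nbar : ℝ := ((univ.sup fun j => nOcc b j : ℕ) : ℝ)
  have hnbar : ∀ k, (nOcc b k : ℝ) ≤ nbar := fun k =>
    Nat.cast_le.mpr (le_sup (f := fun j => nOcc b j) (mem_univ k))
  have hrow := Kplus_row_sub_Kminus_row_le hℓ r (n := fun k => (nOcc b k : ℝ))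
    (fun k => Nat.cast_nonneg _) hnbar
  have hN : ∑ j, (nOcc b j : ℝ) = N := by exact_mod_cast sum_nOcc b
  have hr' : (1 : ℝ) ≤ r := by exact_mod_cast hr
  calc Kplus ℓ b - Kminus ℓ b
      = 1 / 2 * ∑ j, ((∑ k, if 0 < boxDist ℓ j k then
            (nOcc b j : ℝ) * nOcc b k / boxDist ℓ j k else 0)
          - ∑ k, if 0 < boxDist ℓ j k then
            (nOcc b j : ℝ) * nOcc b k / (boxDist ℓ j k + 2 * √3 * ℓ) else 0) := by
        unfold Kplus Kminus
        rw [← mul_sub, ← sum_sub_distrib]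
    _ ≤ 1 / 2 * ∑ j, ((nOcc b j : ℝ) * (nbar * (2 * √3 / ℓ) * (250 * (2 * r + 1)))
          + (1 + (r : ℝ) / 2)⁻¹ * ∑ k, if 0 < boxDist ℓ j k then
            (nOcc b j : ℝ) * nOcc b k / boxDist ℓ j k else 0) := by
        gcongr with j
        exact hrow j
    _ = √3 * (250 * (2 * r + 1)) * nbar * N / ℓ + (1 + (r : ℝ) / 2)⁻¹ * Kplus ℓ b := by
        unfold Kplus
        rw [sum_add_distrib, ← sum_mul, hN, ← mul_sum]
        ring
    _ ≤ 1500 * r * nbar * N / ℓ + (1 + (r : ℝ) / 2)⁻¹ * Kplus ℓ b := by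
        gcongr ?_ * _ * _ / _ + _
        nlinarith [sqrt_three_le_two, Real.sqrt_nonneg 3]
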